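/- For every z with 0 < z ≤ ẑ, one has φ₂(z,z) = z^{−n₂}h(z) − ∫₀^z η^{−n₂}I(η)dη < 0. -/

import Mathlib

/-
The conjugate `ũ` satisfies `(a - b) I(a) ≤ ũ(b) - ũ(a)` (tangent line of the concave `u` at
`I(b)`), so `ũ' = -I`. Hence `h` is continuous on `(0, ∞)` (the two branches agree at `z_S`
because `f(z_S) = 0`) and `h' = ε̂ - ĉ + I` off `z_S`. Integrating `(η^{-n₂} h(η))'` over `(0, z)`
gives `φ₂(z, z) + ∫₀^z η^{-n₂} I = z^{-n₂} h(z)`; the boundary term at `0` vanishes since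
`|h(η)| ≤ η I(η) / κ₁ + ε₁ η` and, `I` being decreasing,
`η^{1-n₂} I(η) ≤ (1 - n₂) ∫₀^η s^{-n₂} I(s) ds → 0`.
Finally `h < 0` near `0` because `I(η/κ₂) → ∞`, and `ẑ` is the only zero of `h`, so `h ≤ 0` on
`(0, ẑ]` by the intermediate value theorem, while `∫₀^z η^{-n₂} I > 0`.
-/

open MeasureTheory Set Filter Topology Function

theorem ConcaveOn.le_add_mul_sub_of_hasDerivAt {S : Set ℝ} {f : ℝ → ℝ} {f' x y : ℝ}
    (hf : ConcaveOn ℝ S f) (hx : x ∈ S) (hy : y ∈ S) (hf' : HasDerivAt f f' x) :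
    f y ≤ f x + f' * (y - x) := by
  rcases lt_trichotomy x y with hxy | rfl | hyx
  · have := hf.slope_le_of_hasDerivAt hx hy hxy hf'
    rw [slope_def_field, div_le_iff₀ (sub_pos.2 hxy)] at this
    linarith
  · simp
  · have := hf.le_slope_of_hasDerivAt hy hx hyx hf'
    rw [slope_def_field, le_div_iff₀ (sub_pos.2 hyx)] at this
    linarith

theorem hasDerivAt_of_sub_mul_le_sub {F f : ℝ → ℝ} {s : Set ℝ} {y : ℝ} (hs : s ∈ 𝓝 y)
    (hF : ∀ a ∈ s, ∀ b ∈ s, (b - a) * f a ≤ F b - F a) (hf : ContinuousAt f y) :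
    HasDerivAt F (f y) y := by
  rw [hasDerivAt_iff_isLittleO, Asymptotics.isLittleO_iff]
  intro c hc
  filter_upwards [hs, hf.eventually (Metric.closedBall_mem_nhds (f y) hc)] with b hb hfb
  have hy := mem_of_mem_nhds hs
  -- `lower` and `upper` squeeze `F b - F y - (b - y) * f y` between `0` and `(b - y) * (f b - f y)`
  have lower := hF y hy b hb
  have upper := hF b hb y hy
  rw [Real.dist_eq] at hfb
  have hprod : (b - y) * (f b - f y) ≤ c * |b - y| := by
    calc (b - y) * (f b - f y) ≤ |b - y| * |f b - f y| := by
          rw [← abs_mul]; exact le_abs_self _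
      _ ≤ c * |b - y| := by rw [mul_comm c]; gcongr
  rw [Real.norm_eq_abs, Real.norm_eq_abs, smul_eq_mul, abs_le]
  constructor <;> nlinarith

theorem integral_eq_sub_of_hasDerivAt_off_countable_of_tendsto {G g : ℝ → ℝ} {a b L : ℝ}
    {s : Set ℝ} (hab : a < b) (hs : s.Countable) (hGc : ContinuousOn G (Ioc a b))
    (hGa : Tendsto G (𝓝[>] a) (𝓝 L)) (hGd : ∀ x ∈ Ioo a b \ s, HasDerivAt G (g x) x)
    (hg : IntervalIntegrable g volume a b) :
    ∫ x in a..b, g x = G b - L := by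
  have hc : ContinuousOn (update G a L) (Icc a b) := by
    rw [continuousOn_update_iff, Icc_sdiff_left]
    exact ⟨hGc, fun _ => hGa.mono_left (nhdsWithin_mono _ Ioc_subset_Ioi_self)⟩
  have hd : ∀ x ∈ Ioo a b \ s, HasDerivAt (update G a L) (g x) x := fun x hx =>
    (hGd x hx).congr_of_eventuallyEq <| by
      filter_upwards [Ioi_mem_nhds hx.1.1] with y hy using update_of_ne hy.ne' ..
  simpa [hab.ne'] using integral_eq_of_hasDerivAt_off_countable_of_le _ g hab.le hs hc hd hg

theorem integral_rpow_mul_deriv_add {h h' : ℝ → ℝ} {p z : ℝ} {s : Set ℝ} (hs : s.Countable)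
    (hz : 0 < z) (hc : ContinuousOn h (Ioc 0 z))
    (hd : ∀ x ∈ Ioo 0 z \ s, HasDerivAt h (h' x) x)
    (hlim : Tendsto (fun t => t ^ p * h t) (𝓝[>] 0) (𝓝 0))
    (hi' : IntegrableOn (fun x => x ^ p * h' x) (Ioo 0 z))
    (hi : IntegrableOn (fun x => x ^ (p - 1) * h x) (Ioo 0 z)) :
    (∫ x in Ioo 0 z, x ^ p * h' x) + p * ∫ x in Ioo 0 z, x ^ (p - 1) * h x = z ^ p * h z := by
  have hsum : IntegrableOn (fun x => p * (x ^ (p - 1) * h x) + x ^ p * h' x) (Ioo 0 z) :=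
    (hi.const_mul p).add hi'
  have key := integral_eq_sub_of_hasDerivAt_off_countable_of_tendsto
    (G := fun x => x ^ p * h x) hz hs
    ((ContinuousOn.rpow_const continuousOn_id fun x hx => Or.inl hx.1.ne').mul hc) hlim
    (fun x hx => by
      have := (Real.hasDerivAt_rpow_const (p := p) (Or.inl hx.1.1.ne')).mul (hd x hx)
      exact this.congr_deriv (by ring))
    ((intervalIntegrable_iff_integrableOn_Ioo_of_le hz.le).2 hsum)
  rw [intervalIntegral.integral_of_le hz.le, integral_Ioc_eq_integral_Ioo,
    integral_add (hi.const_mul p) hi', integral_const_mul, sub_zero] at key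
  linarith

theorem nonpos_of_eventually_neg_of_unique_zero {f : ℝ → ℝ} {z₀ z : ℝ}
    (hf : ContinuousOn f (Ioi 0)) (hneg : ∀ᶠ t in 𝓝[>] 0, f t < 0) (hz₀ : f z₀ = 0)
    (huniq : ∀ z, 0 < z → f z = 0 → z = z₀) (hz : 0 < z) (hzz₀ : z ≤ z₀) :
    f z ≤ 0 := by
  rcases hzz₀.eq_or_lt with rfl | hlt
  · exact hz₀.le
  by_contra! hpos
  obtain ⟨t, hft, ht⟩ := (hneg.and (Ioo_mem_nhdsGT hz)).exists
  obtain ⟨c, hc, hfc⟩ := intermediate_value_Icc ht.2.le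
    (hf.mono fun x hx => ht.1.trans_le hx.1) ⟨hft.le, hpos.le⟩
  exact (hc.2.trans_lt hlt).ne (huniq c (ht.1.trans_le hc.1) hfc)

theorem integral_Ioo_pos {f : ℝ → ℝ} {a b : ℝ} (hab : a < b) (hf : IntegrableOn f (Ioo a b))
    (hpos : ∀ x ∈ Ioo a b, 0 < f x) : 0 < ∫ x in Ioo a b, f x := by
  rw [← integral_Ioc_eq_integral_Ioo, ← intervalIntegral.integral_of_le hab.le]
  exact intervalIntegral.intervalIntegral_pos_of_pos_on
    ((intervalIntegrable_iff_integrableOn_Ioo_of_le hab.le).2 hf) hpos hab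

theorem AntitoneOn.tendsto_rpow_add_one_mul {f : ℝ → ℝ} {p z : ℝ} (hp : -1 < p) (hz : 0 < z)
    (hf : AntitoneOn f (Ioi 0)) (hf0 : ∀ x, 0 < x → 0 ≤ f x)
    (hint : IntegrableOn (fun x => x ^ p * f x) (Ioo 0 z)) :
    Tendsto (fun t => t ^ (p + 1) * f t) (𝓝[>] 0) (𝓝 0) := by
  have hint' : IntegrableOn (fun x => x ^ p * f x) (uIcc 0 z) := by
    rwa [uIcc_of_le hz.le, integrableOn_Icc_iff_integrableOn_Ioo]
  have hF : Tendsto (fun t => ∫ x in 0..t, x ^ p * f x) (𝓝[>] 0) (𝓝 0) := by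
    have := (intervalIntegral.continuousOn_primitive_interval hint' 0 left_mem_uIcc).tendsto
    rw [intervalIntegral.integral_same, uIcc_of_le hz.le] at this
    rw [← nhdsWithin_Ioo_eq_nhdsGT hz]
    exact this.mono_left (nhdsWithin_mono _ Ioo_subset_Icc_self)
  have hp1 : 0 < p + 1 := by linarith
  have hbound := hF.const_mul (p + 1)
  rw [mul_zero] at hbound
  refine tendsto_of_tendsto_of_tendsto_of_le_of_le' tendsto_const_nhds hbound ?_ ?_
  · filter_upwards [self_mem_nhdsWithin] with t ht
    exact mul_nonneg (Real.rpow_nonneg ht.out.le _) (hf0 t ht)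
  · filter_upwards [self_mem_nhdsWithin, Ioo_mem_nhdsGT hz] with t ht htz
    have hrpow : ∫ x in 0..t, x ^ p = t ^ (p + 1) / (p + 1) := by
      rw [integral_rpow (Or.inl hp), Real.zero_rpow hp1.ne', sub_zero]
    calc t ^ (p + 1) * f t = (p + 1) * ∫ x in 0..t, x ^ p * f t := by
          rw [intervalIntegral.integral_mul_const, hrpow]; field_simp
      _ ≤ (p + 1) * ∫ x in 0..t, x ^ p * f x := by
          refine mul_le_mul_of_nonneg_left ?_ hp1.le
          refine intervalIntegral.integral_mono_on_of_le_Ioo ht.out.le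
            ((intervalIntegral.intervalIntegrable_rpow' hp).mul_const _)
            (hint'.mono_set ?_).intervalIntegrable fun x hx => ?_
          · rw [uIcc_of_le ht.out.le, uIcc_of_le hz.le]
            exact Icc_subset_Icc_right htz.2.le
          · exact mul_le_mul_of_nonneg_left (hf hx.1 ht hx.2.le) (Real.rpow_nonneg hx.1.le _)

section Bounds

variable {h I : ℝ → ℝ} {p z c d : ℝ}

theorem tendsto_rpow_mul_of_abs_le (hp : -1 < p) (hz : 0 < z) (hI_pos : ∀ y, 0 < y → 0 < I y)
    (hI_anti : AntitoneOn I (Ioi 0)) (hI_int : IntegrableOn (fun x => x ^ p * I x) (Ioo 0 z))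
    (hbd : ∀ x, 0 < x → |h x| ≤ c * (x * I x) + d * x) :
    Tendsto (fun t => t ^ p * h t) (𝓝[>] 0) (𝓝 0) := by
  have hp1 : 0 < p + 1 := by linarith
  have hpow : Tendsto (fun t : ℝ => t ^ (p + 1)) (𝓝[>] 0) (𝓝 0) := by
    have := (Real.continuousAt_rpow_const 0 (p + 1) (Or.inr hp1.le)).tendsto
    rw [Real.zero_rpow hp1.ne'] at this
    exact this.mono_left nhdsWithin_le_nhds
  have hmajor := ((hI_anti.tendsto_rpow_add_one_mul hp hz (fun x hx => (hI_pos x hx).le)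
    hI_int).const_mul c).add (hpow.const_mul d)
  rw [mul_zero, mul_zero, add_zero] at hmajor
  refine squeeze_zero_norm' ?_ hmajor
  filter_upwards [self_mem_nhdsWithin] with t ht
  have ht0 : 0 < t := ht
  rw [Real.norm_eq_abs, abs_mul, abs_of_pos (Real.rpow_pos_of_pos ht0 p),
    Real.rpow_add_one ht0.ne']
  calc t ^ p * |h t| ≤ t ^ p * (c * (t * I t) + d * t) :=
        mul_le_mul_of_nonneg_left (hbd t ht0) (Real.rpow_nonneg ht0.le p)
    _ = c * (t ^ p * t * I t) + d * (t ^ p * t) := by ring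

theorem integrableOn_rpow_sub_one_mul_of_abs_le (hp : -1 < p) (hz : 0 < z)
    (hh : ContinuousOn h (Ioi 0)) (hI_int : IntegrableOn (fun x => x ^ p * I x) (Ioo 0 z))
    (hbd : ∀ x, 0 < x → |h x| ≤ c * (x * I x) + d * x) :
    IntegrableOn (fun x => x ^ (p - 1) * h x) (Ioo 0 z) := by
  have hmajor : IntegrableOn (fun x => c * (x ^ p * I x) + d * x ^ p) (Ioo 0 z) :=
    (hI_int.const_mul c).add (((intervalIntegral.integrableOn_Ioo_rpow_iff hz).2 hp).const_mul d)
  have hcont : ContinuousOn (fun x => x ^ (p - 1) * h x) (Ioi 0) :=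
    (ContinuousOn.rpow_const continuousOn_id fun x hx => Or.inl (ne_of_gt hx)).mul hh
  refine hmajor.mono' ((hcont.aestronglyMeasurable measurableSet_Ioi).mono_set
    Ioo_subset_Ioi_self) (ae_restrict_of_forall_mem measurableSet_Ioo fun x hx => ?_)
  rw [Real.norm_eq_abs, abs_mul, abs_of_pos (Real.rpow_pos_of_pos hx.1 _),
    Real.rpow_sub_one hx.1.ne']
  calc x ^ p / x * |h x| ≤ x ^ p / x * (c * (x * I x) + d * x) :=
        mul_le_mul_of_nonneg_left (hbd x hx.1) (div_nonneg (Real.rpow_nonneg hx.1.le p) hx.1.le)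
    _ = c * (x ^ p * I x) + d * x ^ p := by have := hx.1.ne'; field_simp

end Bounds

section Conjugate

variable {u u' I utld : ℝ → ℝ}

theorem sub_mul_le_utld_sub (hu : ConcaveOn ℝ (Ici 0) u)
    (hu' : ∀ c, 0 < c → HasDerivAt u (u' c) c) (hI_pos : ∀ y, 0 < y → 0 < I y)
    (hI_left : ∀ y, 0 < y → u' (I y) = y) (hutld : ∀ y, 0 < y → utld y = u (I y) - y * I y)
    {a b : ℝ} (ha : 0 < a) (hb : 0 < b) :
    (a - b) * I a ≤ utld b - utld a := by
  have tangent := hu.le_add_mul_sub_of_hasDerivAt (hI_pos b hb).le (hI_pos a ha).le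
    (hu' _ (hI_pos b hb))
  rw [hI_left b hb] at tangent
  rw [hutld a ha, hutld b hb]
  nlinarith

theorem hasDerivAt_utld (hI_cont : ContinuousOn I (Ioi 0))
    (hincr : ∀ a b, 0 < a → 0 < b → (a - b) * I a ≤ utld b - utld a) {y : ℝ} (hy : 0 < y) :
    HasDerivAt utld (-I y) y :=
  hasDerivAt_of_sub_mul_le_sub (f := fun x => -I x) (Ioi_mem_nhds hy)
    (fun a ha b hb => by linarith [hincr a b ha hb])
    (hI_cont.continuousAt (Ioi_mem_nhds hy)).neg

theorem hasDerivAt_utld_div_sub_utld_add_mul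
    (hD : ∀ y, 0 < y → HasDerivAt utld (-I y) y) {κ ε x : ℝ} (hκ : 0 < κ) (hx : 0 < x) :
    HasDerivAt (fun z => utld (z / κ) - utld z + ε * z) (ε - 1 / κ * I (x / κ) + I x) x := by
  have hdiv := (hD (x / κ) (div_pos hx hκ)).comp x ((hasDerivAt_id x).div_const κ)
  exact ((hdiv.sub (hD x hx)).add ((hasDerivAt_id x).const_mul ε)).congr_deriv (by ring)

end Conjugate

section Branches

variable {I utld h chat ehat : ℝ → ℝ} {κ₁ κ₂ ε₁ ε₂ z_S : ℝ}

theorem continuousOn_of_branches (hD : ∀ y, 0 < y → HasDerivAt utld (-I y) y)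
    (hκ₁ : 0 < κ₁) (hκ₂ : 0 < κ₂)
    (hmatch : utld (z_S / κ₂) - utld z_S + ε₂ * z_S = utld (z_S / κ₁) - utld z_S + ε₁ * z_S)
    (hh₁ : ∀ z, z_S < z → h z = utld (z / κ₁) - utld z + ε₁ * z)
    (hh₂ : ∀ z, 0 < z → z ≤ z_S → h z = utld (z / κ₂) - utld z + ε₂ * z) :
    ContinuousOn h (Ioi 0) := by
  have hbranch : ∀ {κ} (ε : ℝ), 0 < κ →
      ContinuousOn (fun z => utld (z / κ) - utld z + ε * z) (Ioi 0) := fun ε hκ x hx =>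
    (hasDerivAt_utld_div_sub_utld_add_mul (ε := ε) hD hκ hx).continuousAt.continuousWithinAt
  refine (ContinuousOn.if (p := fun z => z ≤ z_S) ?_ ((hbranch ε₂ hκ₂).mono inter_subset_left)
    ((hbranch ε₁ hκ₁).mono inter_subset_left)).congr fun x hx => ?_
  · rintro a ⟨-, ha⟩
    rw [mem_singleton_iff.1 (frontier_Iic_subset z_S ha)]
    exact hmatch
  · by_cases hxz : x ≤ z_S
    · simp only [if_pos hxz, hh₂ x hx hxz]
    · simp only [if_neg hxz, hh₁ x (not_le.1 hxz)]

theorem hasDerivAt_of_branches (hD : ∀ y, 0 < y → HasDerivAt utld (-I y) y)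
    (hκ₁ : 0 < κ₁) (hκ₂ : 0 < κ₂)
    (hh₁ : ∀ z, z_S < z → h z = utld (z / κ₁) - utld z + ε₁ * z)
    (hh₂ : ∀ z, 0 < z → z ≤ z_S → h z = utld (z / κ₂) - utld z + ε₂ * z)
    (hchat₁ : ∀ η, z_S < η → chat η = 1 / κ₁ * I (η / κ₁))
    (hchat₂ : ∀ η, 0 < η → η ≤ z_S → chat η = 1 / κ₂ * I (η / κ₂))
    (hehat₁ : ∀ η, z_S < η → ehat η = ε₁) (hehat₂ : ∀ η, 0 < η → η ≤ z_S → ehat η = ε₂)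
    {x : ℝ} (hx : 0 < x) (hxz : x ≠ z_S) :
    HasDerivAt h (ehat x - chat x + I x) x := by
  rcases hxz.lt_or_gt with hlt | hgt
  · rw [hehat₂ x hx hlt.le, hchat₂ x hx hlt.le]
    refine (hasDerivAt_utld_div_sub_utld_add_mul hD hκ₂ hx).congr_of_eventuallyEq ?_
    filter_upwards [Ioo_mem_nhds hx hlt] with t ht using hh₂ t ht.1 ht.2.le
  · rw [hehat₁ x hgt, hchat₁ x hgt]
    refine (hasDerivAt_utld_div_sub_utld_add_mul hD hκ₁ hx).congr_of_eventuallyEq ?_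
    filter_upwards [Ioi_mem_nhds hgt] with t ht using hh₁ t ht

theorem chat_pos_and_le (hI_pos : ∀ y, 0 < y → 0 < I y) (hI_anti : AntitoneOn I (Ioi 0))
    (hκ₁ : 0 < κ₁) (hκ₁₂ : κ₁ ≤ κ₂) (hκ₂ : κ₂ ≤ 1)
    (hchat₁ : ∀ η, z_S < η → chat η = 1 / κ₁ * I (η / κ₁))
    (hchat₂ : ∀ η, 0 < η → η ≤ z_S → chat η = 1 / κ₂ * I (η / κ₂)) {x : ℝ} (hx : 0 < x) :
    0 < chat x ∧ chat x ≤ 1 / κ₁ * I x := by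
  have hbranch : ∀ κ, κ₁ ≤ κ → κ ≤ 1 →
      0 < 1 / κ * I (x / κ) ∧ 1 / κ * I (x / κ) ≤ 1 / κ₁ * I x := by
    intro κ hκ₁κ hκ1
    have hκ : 0 < κ := hκ₁.trans_le hκ₁κ
    have hxκ : x ≤ x / κ := le_div_self hx.le hκ hκ1
    have hIpos := hI_pos _ (div_pos hx hκ)
    refine ⟨by positivity, mul_le_mul (one_div_le_one_div_of_le hκ₁ hκ₁κ)
      (hI_anti hx (hx.trans_le hxκ) hxκ) hIpos.le (by positivity)⟩
  rcases le_or_gt x z_S with hle | hgt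
  · rw [hchat₂ x hx hle]; exact hbranch κ₂ hκ₁₂ hκ₂
  · rw [hchat₁ x hgt]; exact hbranch κ₁ le_rfl (hκ₁₂.trans hκ₂)

theorem abs_le_of_branches (hI_pos : ∀ y, 0 < y → 0 < I y)
    (hincr : ∀ a b, 0 < a → 0 < b → (a - b) * I a ≤ utld b - utld a)
    (hκ₁ : 0 < κ₁) (hκ₁₂ : κ₁ ≤ κ₂) (hκ₂ : κ₂ ≤ 1) (hε₂ : 0 < ε₂) (hε₁₂ : ε₂ ≤ ε₁)
    (hh₁ : ∀ z, z_S < z → h z = utld (z / κ₁) - utld z + ε₁ * z)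
    (hh₂ : ∀ z, 0 < z → z ≤ z_S → h z = utld (z / κ₂) - utld z + ε₂ * z) {x : ℝ} (hx : 0 < x) :
    |h x| ≤ 1 / κ₁ * (x * I x) + ε₁ * x := by
  have hbranch : ∀ κ ε, κ₁ ≤ κ → κ ≤ 1 → 0 < ε → ε ≤ ε₁ →
      |utld (x / κ) - utld x + ε * x| ≤ 1 / κ₁ * (x * I x) + ε₁ * x := by
    intro κ ε hκ₁κ hκ1 hε hεε₁
    have hκ : 0 < κ := hκ₁.trans_le hκ₁κ
    have hxκ : x ≤ x / κ := le_div_self hx.le hκ hκ1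
    have hxκ₁ : x / κ ≤ 1 / κ₁ * x := by
      rw [one_div_mul_eq_div]; exact div_le_div_of_nonneg_left hx.le hκ₁ hκ₁κ
    have lower := hincr x (x / κ) hx (div_pos hx hκ)
    have upper := hincr (x / κ) x (div_pos hx hκ) hx
    have hIx := hI_pos x hx
    have hIxκ := hI_pos _ (div_pos hx hκ)
    rw [abs_le]
    constructor <;> nlinarith
  rcases le_or_gt x z_S with hle | hgt
  · rw [hh₂ x hx hle]; exact hbranch κ₂ ε₂ hκ₁₂ hκ₂ hε₂ hε₁₂
  · rw [hh₁ x hgt]; exact hbranch κ₁ ε₁ le_rfl (hκ₁₂.trans hκ₂) (hε₂.trans_le hε₁₂) le_rfl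

theorem eventually_neg_of_branches (hI_zero : Tendsto I (𝓝[>] 0) atTop)
    (hincr : ∀ a b, 0 < a → 0 < b → (a - b) * I a ≤ utld b - utld a)
    (hκ₂ : 0 < κ₂) (hκ₂1 : κ₂ < 1) (hzS : 0 < z_S)
    (hh₂ : ∀ z, 0 < z → z ≤ z_S → h z = utld (z / κ₂) - utld z + ε₂ * z) :
    ∀ᶠ t in 𝓝[>] 0, h t < 0 := by
  have hdiv : Tendsto (· / κ₂) (𝓝[>] (0 : ℝ)) (𝓝[>] 0) := by
    simpa using (continuous_id.div_const κ₂).continuousWithinAt.tendsto_nhdsWithin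
      (s := Ioi (0 : ℝ)) (t := Ioi 0) (x := 0) fun t ht => div_pos ht hκ₂
  have hQ : 0 < 1 / κ₂ - 1 := by rw [sub_pos, lt_one_div one_pos hκ₂]; simpa
  filter_upwards [(hI_zero.comp hdiv).eventually_gt_atTop (ε₂ / (1 / κ₂ - 1)),
    Ioo_mem_nhdsGT hzS] with t hIt ht
  rw [comp_apply, div_lt_iff₀ hQ] at hIt
  have hdrop := hincr (t / κ₂) t (div_pos ht.1 hκ₂) ht.1
  rw [hh₂ t ht.1 ht.2.le]
  have : t / κ₂ - t = t * (1 / κ₂ - 1) := by ring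
  rw [this] at hdrop
  nlinarith [ht.1]

theorem integrableOn_rpow_mul_ehat_sub_chat {p z : ℝ} (hp : -1 < p) (hz : 0 < z) (hzS : 0 ≤ z_S)
    (hI_cont : ContinuousOn I (Ioi 0)) (hI_int : IntegrableOn (fun x => x ^ p * I x) (Ioo 0 z))
    (hκ₁ : 0 < κ₁) (hκ₂ : 0 < κ₂) (hε₂ : 0 < ε₂) (hε₁₂ : ε₂ ≤ ε₁)
    (hchat : ∀ x, 0 < x → 0 < chat x ∧ chat x ≤ 1 / κ₁ * I x)
    (hchat₁ : ∀ η, z_S < η → chat η = 1 / κ₁ * I (η / κ₁))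
    (hchat₂ : ∀ η, 0 < η → η ≤ z_S → chat η = 1 / κ₂ * I (η / κ₂))
    (hehat₁ : ∀ η, z_S < η → ehat η = ε₁) (hehat₂ : ∀ η, 0 < η → η ≤ z_S → ehat η = ε₂) :
    IntegrableOn (fun x => x ^ p * (ehat x - chat x)) (Ioo 0 z) := by
  have hbranch : ∀ {κ} (ε : ℝ) {s : Set ℝ}, 0 < κ → s ⊆ Ioi 0 →
      (∀ x ∈ s, ehat x = ε ∧ chat x = 1 / κ * I (x / κ)) →
      ContinuousOn (fun x => x ^ p * (ehat x - chat x)) s := by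
    intro κ ε s hκ hs heq
    refine ContinuousOn.congr (f := fun x => x ^ p * (ε - 1 / κ * I (x / κ))) ?_
      fun x hx => by rw [(heq x hx).1, (heq x hx).2]
    refine ((ContinuousOn.rpow_const continuousOn_id fun x hx => Or.inl (ne_of_gt hx)).mul
      (continuousOn_const.sub (continuousOn_const.mul ?_))).mono hs
    exact hI_cont.comp (continuousOn_id.div_const κ) fun x hx => div_pos hx hκ
  have hmeas : AEStronglyMeasurable (fun x => x ^ p * (ehat x - chat x))
      (volume.restrict (Ioi 0)) := by
    rw [← Ioc_union_Ioi_eq_Ioi hzS, aestronglyMeasurable_union_iff]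
    exact ⟨(hbranch ε₂ hκ₂ Ioc_subset_Ioi_self fun x hx =>
        ⟨hehat₂ x hx.1 hx.2, hchat₂ x hx.1 hx.2⟩).aestronglyMeasurable measurableSet_Ioc,
      (hbranch ε₁ hκ₁ (Ioi_subset_Ioi hzS) fun x hx =>
        ⟨hehat₁ x hx, hchat₁ x hx⟩).aestronglyMeasurable measurableSet_Ioi⟩
  have hmajor : IntegrableOn (fun x => ε₁ * x ^ p + 1 / κ₁ * (x ^ p * I x)) (Ioo 0 z) :=
    (((intervalIntegral.integrableOn_Ioo_rpow_iff hz).2 hp).const_mul ε₁).add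
      (hI_int.const_mul _)
  refine hmajor.mono' (hmeas.mono_set Ioo_subset_Ioi_self)
    (ae_restrict_of_forall_mem measurableSet_Ioo fun x hx => ?_)
  have hehat : 0 < ehat x ∧ ehat x ≤ ε₁ := by
    rcases le_or_gt x z_S with hle | hgt
    · rw [hehat₂ x hx.1 hle]; exact ⟨hε₂, hε₁₂⟩
    · rw [hehat₁ x hgt]; exact ⟨hε₂.trans_le hε₁₂, le_rfl⟩
  have hdiff : |ehat x - chat x| ≤ ε₁ + 1 / κ₁ * I x := by
    have := hchat x hx.1
    rw [abs_le]; constructor <;> linarith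
  have hxp := Real.rpow_pos_of_pos hx.1 p
  rw [Real.norm_eq_abs, abs_mul, abs_of_pos hxp]
  calc x ^ p * |ehat x - chat x| ≤ x ^ p * (ε₁ + 1 / κ₁ * I x) :=
        mul_le_mul_of_nonneg_left hdiff hxp.le
    _ = ε₁ * x ^ p + 1 / κ₁ * (x ^ p * I x) := by ring

end Branches

theorem stmt_14_general
    (n₂ : ℝ)
    (hn₂0 : n₂ < 0)
    (u u' I utld : ℝ → ℝ)
    (hu_conc : StrictConcaveOn ℝ (Set.Ici 0) u)
    (hu_deriv : ∀ c : ℝ, 0 < c → HasDerivAt u (u' c) c)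
    (hI_pos : ∀ y : ℝ, 0 < y → 0 < I y)
    (hI_left : ∀ y : ℝ, 0 < y → u' (I y) = y)
    (hI_anti : StrictAntiOn I (Set.Ioi 0))
    (hI_cont : ContinuousOn I (Set.Ioi 0))
    (hI_zero : Filter.Tendsto I (nhdsWithin 0 (Set.Ioi 0)) Filter.atTop)
    (hutld : ∀ y : ℝ, 0 < y → utld y = u (I y) - y * I y)
    (ε₁ ε₂ κ₁ κ₂ : ℝ)
    (hε₂ : 0 < ε₂) (hε₁₂ : ε₂ < ε₁)
    (hκ₁ : 0 < κ₁) (hκ₁₂ : κ₁ < κ₂) (hκ₂ : κ₂ < 1)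
    (z_S : ℝ) (hzS_pos : 0 < z_S)
    (hzS_zero : (1 / z_S) * (utld (z_S / κ₁) - utld (z_S / κ₂) + z_S * (ε₁ - ε₂)) = 0)
    (h : ℝ → ℝ)
    (hh₁ : ∀ z : ℝ, z_S < z → h z = utld (z / κ₁) - utld z + ε₁ * z)
    (hh₂ : ∀ z : ℝ, 0 < z → z ≤ z_S → h z = utld (z / κ₂) - utld z + ε₂ * z)
    (zhat : ℝ) (hzhat_zero : h zhat = 0)
    (hzhat_uniq : ∀ z : ℝ, 0 < z → h z = 0 → z = zhat)
    (hI_int : ∀ y : ℝ, 0 < y →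
      MeasureTheory.IntegrableOn (fun η => η ^ (-n₂) * I η) (Set.Ioo 0 y) MeasureTheory.volume)
    (chat ehat : ℝ → ℝ)
    (hchat₁ : ∀ η : ℝ, z_S < η → chat η = (1 / κ₁) * I (η / κ₁))
    (hchat₂ : ∀ η : ℝ, 0 < η → η ≤ z_S → chat η = (1 / κ₂) * I (η / κ₂))
    (hehat₁ : ∀ η : ℝ, z_S < η → ehat η = ε₁)
    (hehat₂ : ∀ η : ℝ, 0 < η → η ≤ z_S → ehat η = ε₂)
    (φ₂ : ℝ → ℝ → ℝ)
    (hφ₂ : ∀ z₁ z₂ : ℝ, 0 < z₁ → 0 < z₂ →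
      φ₂ z₁ z₂ = (∫ η in Set.Ioo 0 z₂, η ^ (-n₂) * (ehat η - chat η)) -
        n₂ * ∫ η in Set.Ioo 0 z₁, η ^ (-n₂ - 1) * h η)
    :
    ∀ z : ℝ, 0 < z → z ≤ zhat →
      φ₂ z z = z ^ (-n₂) * h z - (∫ η in Set.Ioo 0 z, η ^ (-n₂) * I η) ∧ φ₂ z z < 0 := by
  intro z hz hzle
  have hκ₂pos : 0 < κ₂ := hκ₁.trans hκ₁₂
  have hp : -1 < -n₂ := by linarith
  have hincr : ∀ a b, 0 < a → 0 < b → (a - b) * I a ≤ utld b - utld a := fun a b ha hb =>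
    sub_mul_le_utld_sub hu_conc.concaveOn hu_deriv hI_pos hI_left hutld ha hb
  have hD : ∀ y, 0 < y → HasDerivAt utld (-I y) y := fun y hy => hasDerivAt_utld hI_cont hincr hy
  have hmatch : utld (z_S / κ₂) - utld z_S + ε₂ * z_S = utld (z_S / κ₁) - utld z_S + ε₁ * z_S := by
    linarith [(mul_eq_zero.1 hzS_zero).resolve_left (by positivity)]
  have hcont := continuousOn_of_branches hD hκ₁ hκ₂pos hmatch hh₁ hh₂
  have hbd := fun x (hx : 0 < x) =>
    abs_le_of_branches hI_pos hincr hκ₁ hκ₁₂.le hκ₂.le hε₂ hε₁₂.le hh₁ hh₂ hx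
  have hA := integrableOn_rpow_mul_ehat_sub_chat hp hz hzS_pos.le hI_cont (hI_int z hz) hκ₁
    hκ₂pos hε₂ hε₁₂.le (fun x hx => chat_pos_and_le hI_pos hI_anti.antitoneOn hκ₁ hκ₁₂.le hκ₂.le
      hchat₁ hchat₂ hx) hchat₁ hchat₂ hehat₁ hehat₂
  have hC := hI_int z hz
  have hid := integral_rpow_mul_deriv_add (h' := fun x => ehat x - chat x + I x)
    (countable_singleton z_S) hz (hcont.mono Ioc_subset_Ioi_self)
    (fun x hx => hasDerivAt_of_branches hD hκ₁ hκ₂pos hh₁ hh₂ hchat₁ hchat₂ hehat₁ hehat₂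
      hx.1.1 hx.2)
    (tendsto_rpow_mul_of_abs_le hp hz hI_pos hI_anti.antitoneOn hC hbd)
    (by simp only [mul_add]; exact hA.add hC)
    (integrableOn_rpow_sub_one_mul_of_abs_le hp hz hcont hC hbd)
  simp only [mul_add] at hid
  rw [integral_add hA hC] at hid
  have hφ : φ₂ z z = z ^ (-n₂) * h z - ∫ η in Set.Ioo 0 z, η ^ (-n₂) * I η := by
    rw [hφ₂ z z hz hz]; linarith
  have hCpos := integral_Ioo_pos hz hC fun x hx =>
    mul_pos (Real.rpow_pos_of_pos hx.1 _) (hI_pos x hx.1)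
  have hhz : h z ≤ 0 := nonpos_of_eventually_neg_of_unique_zero hcont
    (eventually_neg_of_branches hI_zero hincr hκ₂pos hκ₂ hzS_pos hh₂) hzhat_zero hzhat_uniq hz hzle
  refine ⟨hφ, hφ ▸ ?_⟩
  linarith [mul_nonpos_of_nonneg_of_nonpos (Real.rpow_nonneg hz.le (-n₂)) hhz]

/-- for every 0 < z ≤ ẑ, φ₂(z,z) = z^{−n₂}h(z) − ∫₀^z η^{−n₂}I(η)dη < 0. -/
theorem stmt_14
    (δ r θ n₁ n₂ : ℝ)
    (hδ : 0 < δ) (hr : 0 < r) (hθ : θ ≠ 0)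
    (hn₂0 : n₂ < 0) (hn₁1 : 1 < n₁)
    (hroot₁ : θ ^ 2 / 2 * n₁ ^ 2 + (δ - r - θ ^ 2 / 2) * n₁ - δ = 0)
    (hroot₂ : θ ^ 2 / 2 * n₂ ^ 2 + (δ - r - θ ^ 2 / 2) * n₂ - δ = 0)
    (u u' I utld : ℝ → ℝ)
    (hu_mono : StrictMonoOn u (Set.Ici 0))
    (hu_conc : StrictConcaveOn ℝ (Set.Ici 0) u)
    (hu_cont : ContinuousOn u (Set.Ici 0))
    (hu_deriv : ∀ c : ℝ, 0 < c → HasDerivAt u (u' c) c)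
    (hu'_cont : ContinuousOn u' (Set.Ioi 0))
    (hu'_top : Filter.Tendsto u' Filter.atTop (nhds 0))
    (hu'_zero : Filter.Tendsto u' (nhdsWithin 0 (Set.Ioi 0)) Filter.atTop)
    (hI_pos : ∀ y : ℝ, 0 < y → 0 < I y)
    (hI_left : ∀ y : ℝ, 0 < y → u' (I y) = y)
    (hI_right : ∀ c : ℝ, 0 < c → I (u' c) = c)
    (hI_anti : StrictAntiOn I (Set.Ioi 0))
    (hI_cont : ContinuousOn I (Set.Ioi 0))
    (hI_zero : Filter.Tendsto I (nhdsWithin 0 (Set.Ioi 0)) Filter.atTop)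
    (hI_top : Filter.Tendsto I Filter.atTop (nhds 0))
    (hutld : ∀ y : ℝ, 0 < y → utld y = u (I y) - y * I y)
    (ε₁ ε₂ κ₁ κ₂ : ℝ)
    (hε₂ : 0 < ε₂) (hε₁₂ : ε₂ < ε₁)
    (hκ₁ : 0 < κ₁) (hκ₁₂ : κ₁ < κ₂) (hκ₂ : κ₂ < 1)
    (z_S : ℝ) (hzS_pos : 0 < z_S)
    (hzS_zero : (1 / z_S) * (utld (z_S / κ₁) - utld (z_S / κ₂) + z_S * (ε₁ - ε₂)) = 0)
    (hzS_uniq : ∀ y : ℝ, 0 < y →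
      (1 / y) * (utld (y / κ₁) - utld (y / κ₂) + y * (ε₁ - ε₂)) = 0 → y = z_S)
    (h : ℝ → ℝ)
    (hh₁ : ∀ z : ℝ, z_S < z → h z = utld (z / κ₁) - utld z + ε₁ * z)
    (hh₂ : ∀ z : ℝ, 0 < z → z ≤ z_S → h z = utld (z / κ₂) - utld z + ε₂ * z)
    (zhat : ℝ) (hzhat_pos : 0 < zhat) (hzhat_zero : h zhat = 0)
    (hzhat_uniq : ∀ z : ℝ, 0 < z → h z = 0 → z = zhat)
    (hI_int : ∀ y : ℝ, 0 < y →
      MeasureTheory.IntegrableOn (fun η => η ^ (-n₂) * I η) (Set.Ioo 0 y) MeasureTheory.volume)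
    (chat ehat : ℝ → ℝ)
    (hchat₁ : ∀ η : ℝ, z_S < η → chat η = (1 / κ₁) * I (η / κ₁))
    (hchat₂ : ∀ η : ℝ, 0 < η → η ≤ z_S → chat η = (1 / κ₂) * I (η / κ₂))
    (hehat₁ : ∀ η : ℝ, z_S < η → ehat η = ε₁)
    (hehat₂ : ∀ η : ℝ, 0 < η → η ≤ z_S → ehat η = ε₂)
    (φ₁ φ₂ : ℝ → ℝ → ℝ)
    (hφ₁ : ∀ z₁ z₂ : ℝ, 0 < z₁ → 0 < z₂ →
      φ₁ z₁ z₂ = (∫ η in Set.Ioi z₂, η ^ (-n₁) * (ehat η - chat η)) -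
        n₁ * ∫ η in Set.Ioi z₁, η ^ (-n₁ - 1) * h η)
    (hφ₂ : ∀ z₁ z₂ : ℝ, 0 < z₁ → 0 < z₂ →
      φ₂ z₁ z₂ = (∫ η in Set.Ioo 0 z₂, η ^ (-n₂) * (ehat η - chat η)) -
        n₂ * ∫ η in Set.Ioo 0 z₁, η ^ (-n₂ - 1) * h η)
    :
    ∀ z : ℝ, 0 < z → z ≤ zhat →
      φ₂ z z = z ^ (-n₂) * h z - (∫ η in Set.Ioo 0 z, η ^ (-n₂) * I η) ∧ φ₂ z z < 0 :=
  stmt_14_general n₂ hn₂0 u u' I utld hu_conc hu_deriv hI_pos hI_left hI_anti hI_cont hI_zero hutld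
    ε₁ ε₂ κ₁ κ₂ hε₂ hε₁₂ hκ₁ hκ₁₂ hκ₂ z_S hzS_pos hzS_zero h hh₁ hh₂ zhat hzhat_zero hzhat_uniq
    hI_int chat ehat hchat₁ hchat₂ hehat₁ hehat₂ φ₂ hφ₂
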